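/- arXiv:1211.4053 — 7 statements merged into one kernel-verified Lean document; each statement's English description precedes it below -/
import Mathlib

section
/- Let u₀(P,α) = C(aP) − (1−α)·C(bP) − γP with a,b,γ > 0 and α ∈ [0,1), and define P̂(α) = (b√(1−α) − a)/(a·b·(1 − √(1−α))). Then the second derivative of u₀ with respect to P is nonpositive for P ≥ max(P̂(α),0), i.e., u₀(·,α) is concave on [max(P̂(α),0), ∞). -/
noncomputable def C (x : ℝ) : ℝ := (1/2) * Real.logb 2 (1 + x)

/-!
The second derivative of `u₀` is `((1 - α) (b / (1 + b P))² - (a / (1 + a P))²) / (2 log 2)`.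
Writing `s = √(1 - α)`, its sign is that of `s b (1 + a P) - a (1 + b P)`, which is affine in `P`
with slope `-a b (1 - s) < 0` and vanishes at `P̂`.
-/

open Real Set

lemma hasDerivAt_one_add_mul (c x : ℝ) : HasDerivAt (fun P => 1 + c * P) c x := by
  simpa using ((hasDerivAt_id x).const_mul c).const_add 1

lemma hasDerivAt_C_mul {c x : ℝ} (hx : 1 + c * x ≠ 0) :
    HasDerivAt (fun P => C (c * P)) (c / (2 * log 2) * (1 + c * x)⁻¹) x :=
  ((((hasDerivAt_one_add_mul c x).log hx).div_const (log 2)).const_mul (1 / 2)).congr_deriv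
    (by field_simp)

lemma hasDerivAt_inv_one_add_mul {c x : ℝ} (hx : 1 + c * x ≠ 0) :
    HasDerivAt (fun P => (1 + c * P)⁻¹) (-c / (1 + c * x) ^ 2) x :=
  (hasDerivAt_one_add_mul c x).inv hx

section PrimaryUtility

variable {a b : ℝ} (γ α : ℝ)

lemma hasDerivAt_primaryUtility {x : ℝ} (hax : 1 + a * x ≠ 0) (hbx : 1 + b * x ≠ 0) :
    HasDerivAt (fun P => C (a * P) - (1 - α) * C (b * P) - γ * P)
      (a / (2 * log 2) * (1 + a * x)⁻¹ - (1 - α) * (b / (2 * log 2) * (1 + b * x)⁻¹) - γ) x := by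
  have hγ : HasDerivAt (fun P => γ * P) γ x := by simpa using (hasDerivAt_id x).const_mul γ
  exact ((hasDerivAt_C_mul hax).sub ((hasDerivAt_C_mul hbx).const_mul (1 - α))).sub hγ

lemma hasDerivAt_deriv_primaryUtility {x : ℝ} (hax : 1 + a * x ≠ 0) (hbx : 1 + b * x ≠ 0) :
    HasDerivAt
      (fun P => a / (2 * log 2) * (1 + a * P)⁻¹ - (1 - α) * (b / (2 * log 2) * (1 + b * P)⁻¹) - γ)
      (((1 - α) * (b / (1 + b * x)) ^ 2 - (a / (1 + a * x)) ^ 2) / (2 * log 2)) x :=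
  ((((hasDerivAt_inv_one_add_mul hax).const_mul (a / (2 * log 2))).sub
    (((hasDerivAt_inv_one_add_mul hbx).const_mul (b / (2 * log 2))).const_mul (1 - α))).sub_const
    γ).congr_deriv (by field_simp; ring)

lemma concaveOn_primaryUtility {D : Set ℝ} (hD : Convex ℝ D)
    (hpole : ∀ x ∈ D, 1 + a * x ≠ 0 ∧ 1 + b * x ≠ 0)
    (hsign : ∀ x ∈ D, (1 - α) * (b / (1 + b * x)) ^ 2 ≤ (a / (1 + a * x)) ^ 2) :
    ConcaveOn ℝ D (fun P => C (a * P) - (1 - α) * C (b * P) - γ * P) := by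
  have hlog : 0 < log 2 := log_pos one_lt_two
  have hint : ∀ x ∈ interior D, 1 + a * x ≠ 0 ∧ 1 + b * x ≠ 0 :=
    fun x hx => hpole x (interior_subset hx)
  exact concaveOn_of_hasDerivWithinAt2_nonpos hD
    (fun x hx => (hasDerivAt_primaryUtility γ α (hpole x hx).1 (hpole x hx).2).continuousAt
      |>.continuousWithinAt)
    (fun x hx => (hasDerivAt_primaryUtility γ α (hint x hx).1 (hint x hx).2).hasDerivWithinAt)
    (fun x hx => (hasDerivAt_deriv_primaryUtility γ α (hint x hx).1 (hint x hx).2).hasDerivWithinAt)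
    (fun x hx => div_nonpos_of_nonpos_of_nonneg (sub_nonpos.2 (hsign x (interior_subset hx)))
      (by positivity))

end PrimaryUtility

lemma sq_mul_div_one_add_mul_le {a b s x : ℝ} (ha : 0 < a) (hb : 0 < b) (hs₀ : 0 ≤ s) (hs : s < 1)
    (hx : 0 ≤ x) (hxs : (b * s - a) / (a * b * (1 - s)) ≤ x) :
    s ^ 2 * (b / (1 + b * x)) ^ 2 ≤ (a / (1 + a * x)) ^ 2 := by
  have hden : 0 < a * b * (1 - s) := mul_pos (mul_pos ha hb) (sub_pos.2 hs)
  rw [div_le_iff₀ hden] at hxs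
  have hle : s * (b / (1 + b * x)) ≤ a / (1 + a * x) := by
    rw [← mul_div_assoc, div_le_div_iff₀ (by positivity) (by positivity)]
    nlinarith
  rw [← mul_pow]
  exact pow_le_pow_left₀ (by positivity) hle 2

theorem stmt3_general (a b γ α : ℝ) (ha : 0 < a) (hb : 0 < b)
    (hα : α ∈ Set.Ioo (0:ℝ) 1)
    (Phat : ℝ) (hPhat : Phat = (b * Real.sqrt (1 - α) - a) / (a * b * (1 - Real.sqrt (1 - α)))) :
    ConcaveOn ℝ (Set.Ici (max Phat 0))
      (fun P => C (a * P) - (1 - α) * C (b * P) - γ * P) := by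
  obtain ⟨hα₀, hα₁⟩ := hα
  have hs : sqrt (1 - α) < 1 := by rw [sqrt_lt' one_pos]; linarith
  refine concaveOn_primaryUtility γ α (convex_Ici _) (fun x hx => ?_) (fun x hx => ?_) <;>
    obtain ⟨hPx, hx₀⟩ := max_le_iff.1 (mem_Ici.1 hx)
  · constructor <;> positivity
  · rw [← sq_sqrt (by linarith : 0 ≤ 1 - α)]
    exact sq_mul_div_one_add_mul_le ha hb (sqrt_nonneg _) hs hx₀ (hPhat ▸ hPx)

theorem stmt3 (a b γ α : ℝ) (ha : 0 < a) (hb : 0 < b) (hγ : 0 < γ)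
    (hα : α ∈ Set.Ioo (0:ℝ) 1)
    (Phat : ℝ) (hPhat : Phat = (b * Real.sqrt (1 - α) - a) / (a * b * (1 - Real.sqrt (1 - α)))) :
    ConcaveOn ℝ (Set.Ici (max Phat 0))
      (fun P => C (a * P) - (1 - α) * C (b * P) - γ * P) :=
  stmt3_general a b γ α ha hb hα Phat hPhat
end

section
/- Fix α ∈ [0,1] and a continuous increasing cost J with J(0) = 0. Let u₀(P) = C(aP) − (1−α)C(bP) − J(P) and u₀'(P) = [C(aP) − (1−α)C(bP)]⁺ − J(P), where [x]⁺ = max(x,0). If P* ∈ [0, Pmax] maximizes u₀ over [0, Pmax], then the point argmax over {0, P*} of u₀' maximizes u₀' over [0, Pmax]; in particular, if u₀(P*) > 0 then P* also maximizes u₀' over [0, Pmax]. -/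
/-- Where `g x ≥ 0` the two utilities agree, so `p` wins; where `g x < 0` the penalised utility
is `-J x`, which the cheapest point `z` already beats. -/
theorem posPart_sub_le_max_of_isMaxOn {ι : Type*} {s : Set ι} {g J : ι → ℝ} {p z x : ι}
    (hp : IsMaxOn (fun y => g y - J y) s p) (hz : IsMinOn J s z) (hx : x ∈ s) :
    max (g x) 0 - J x ≤ max (max (g p) 0 - J p) (max (g z) 0 - J z) := by
  rcases le_total 0 (g x) with hgx | hgx
  · calc max (g x) 0 - J x = g x - J x := by rw [max_eq_left hgx]
      _ ≤ g p - J p := hp hx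
      _ ≤ max (g p) 0 - J p := sub_le_sub_right (le_max_left _ _) _
      _ ≤ _ := le_max_left _ _
  · calc max (g x) 0 - J x = 0 - J x := by rw [max_eq_right hgx]
      _ ≤ max (g z) 0 - J z := sub_le_sub (le_max_right _ _) (hz hx)
      _ ≤ _ := le_max_right _ _

theorem stmt5_general (a b Pmax α : ℝ)
    (J : ℝ → ℝ) (hJm : Monotone J) (hJ0 : J 0 = 0)
    (u0 u0' : ℝ → ℝ)
    (hu0 : ∀ P, u0 P = C (a * P) - (1 - α) * C (b * P) - J P)
    (hu0' : ∀ P, u0' P = max (C (a * P) - (1 - α) * C (b * P)) 0 - J P)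
    (Pstar : ℝ)
    (hmax : ∀ P ∈ Set.Icc 0 Pmax, u0 P ≤ u0 Pstar) :
    ((u0' 0 ≤ u0' Pstar → ∀ P ∈ Set.Icc 0 Pmax, u0' P ≤ u0' Pstar) ∧
     (u0' Pstar ≤ u0' 0 → ∀ P ∈ Set.Icc 0 Pmax, u0' P ≤ u0' 0)) ∧
    (0 < u0 Pstar → ∀ P ∈ Set.Icc 0 Pmax, u0' P ≤ u0' Pstar) := by
  have hzero : u0' 0 = 0 := by simp [hu0', C, hJ0]
  have hbound (P : ℝ) (hP : P ∈ Set.Icc 0 Pmax) : u0' P ≤ max (u0' Pstar) (u0' 0) := by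
    simp only [hu0']
    exact posPart_sub_le_max_of_isMaxOn
      (fun Q hQ => by simpa only [hu0, Set.mem_ofPred_eq] using hmax Q hQ) (fun _ hQ => hJm hQ.1) hP
  have hle : u0 Pstar ≤ u0' Pstar := by
    rw [hu0, hu0']
    exact sub_le_sub_right (le_max_left _ _) _
  refine ⟨⟨fun h P hP => (hbound P hP).trans_eq (max_eq_left h),
    fun h P hP => (hbound P hP).trans_eq (max_eq_right h)⟩, fun hpos P hP => ?_⟩
  exact (hbound P hP).trans_eq (max_eq_left (hzero.trans_le (hpos.trans_le hle).le))

theorem stmt5 (a b Pmax α : ℝ) (ha : 0 < a) (hb : 0 < b) (hPmax : 0 < Pmax)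
    (hα : α ∈ Set.Icc (0:ℝ) 1)
    (J : ℝ → ℝ) (hJc : Continuous J) (hJm : Monotone J) (hJ0 : J 0 = 0)
    (u0 u0' : ℝ → ℝ)
    (hu0 : ∀ P, u0 P = C (a * P) - (1 - α) * C (b * P) - J P)
    (hu0' : ∀ P, u0' P = max (C (a * P) - (1 - α) * C (b * P)) 0 - J P)
    (Pstar : ℝ) (hPs : Pstar ∈ Set.Icc 0 Pmax)
    (hmax : ∀ P ∈ Set.Icc 0 Pmax, u0 P ≤ u0 Pstar) :
    ((u0' 0 ≤ u0' Pstar → ∀ P ∈ Set.Icc 0 Pmax, u0' P ≤ u0' Pstar) ∧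
     (u0' Pstar ≤ u0' 0 → ∀ P ∈ Set.Icc 0 Pmax, u0' P ≤ u0' 0)) ∧
    (0 < u0 Pstar → ∀ P ∈ Set.Icc 0 Pmax, u0' P ≤ u0' Pstar) :=
  stmt5_general a b Pmax α J hJm hJ0 u0 u0' hu0 hu0' Pstar hmax
end

section
/- Define X(α) = α·a·b − γ̄(a+b) and Y(α) = 4γ̄·a·b·(γ̄ − a + b(1−α)) and P'(α) = (X(α) + √(X(α)² − Y(α)))/(2γ̄ab), for a,b,γ̄ > 0 with X(α)² − Y(α) ≥ 0 on [0,1]. Then P'(α) is (weakly) increasing in α on [0,1]; in particular P'(0) ≤ P'(1). -/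
/-!
`P'(α)` is the larger root of the quadratic
`q_α(t) = γab t² - X(α) t + (γ - a + b(1 - α))`, whose discriminant is `X(α)² - Y(α)`.
Since `q_β(t) = q_α(t) - (β - α) b (a t + 1)`, for `α ≤ β` the root `r = P'(α)` satisfies
`q_β(r) ≤ 0` as soon as `r ≥ -1/a`, and then `r` lies below the larger root `P'(β)`.
The bound `P'(α) ≥ -1/a` holds because `q_α(-1/a) = b - a`: if `b ≤ a` then `-1/a` lies between
the roots, and if `a ≤ b` then already the vertex `X(α)/(2γab)` is at least `-1/a`.
-/

open Real Set

noncomputable def largerRoot (c p q : ℝ) : ℝ := (p + √(p ^ 2 - 4 * c * q)) / (2 * c)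

section LargerRoot

variable {c p q : ℝ}

lemma le_largerRoot {s : ℝ} (hc : 0 < c) (hs : c * s ^ 2 - p * s + q ≤ 0) :
    s ≤ largerRoot c p q := by
  have hsq : (2 * c * s - p) ^ 2 ≤ p ^ 2 - 4 * c * q := by nlinarith
  have hle : 2 * c * s - p ≤ √(p ^ 2 - 4 * c * q) :=
    calc 2 * c * s - p ≤ |2 * c * s - p| := le_abs_self _
      _ = √((2 * c * s - p) ^ 2) := (sqrt_sq_eq_abs _).symm
      _ ≤ √(p ^ 2 - 4 * c * q) := sqrt_le_sqrt hsq
  rw [largerRoot, le_div_iff₀ (by positivity)]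
  linarith

lemma div_le_largerRoot (hc : 0 ≤ c) : p / (2 * c) ≤ largerRoot c p q :=
  div_le_div_of_nonneg_right (le_add_of_nonneg_right (sqrt_nonneg _)) (by positivity)

lemma largerRoot_isRoot (hc : c ≠ 0) (hd : 0 ≤ p ^ 2 - 4 * c * q) :
    c * largerRoot c p q ^ 2 - p * largerRoot c p q + q = 0 := by
  rw [largerRoot]
  set s := √(p ^ 2 - 4 * c * q) with hs
  have hr : c * ((p + s) / (2 * c)) ^ 2 - p * ((p + s) / (2 * c)) + q
      = (s ^ 2 - (p ^ 2 - 4 * c * q)) / (4 * c) := by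
    field_simp
    ring
  rw [hr, hs, sq_sqrt hd, sub_self, zero_div]

end LargerRoot

noncomputable def powerRoot (a b γ α : ℝ) : ℝ :=
  largerRoot (γ * a * b) (α * a * b - γ * (a + b)) (γ - a + b * (1 - α))

section PowerRoot

variable {a b γ : ℝ}

lemma neg_inv_le_powerRoot (ha : 0 < a) (hb : 0 < b) (hγ : 0 < γ) {α : ℝ} (hα : 0 ≤ α) :
    -a⁻¹ ≤ powerRoot a b γ α := by
  rcases le_total b a with hba | hab
  · have hq : γ * a * b * (-a⁻¹) ^ 2 - (α * a * b - γ * (a + b)) * (-a⁻¹)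
        + (γ - a + b * (1 - α)) = b - a := by
      field_simp
      ring
    exact le_largerRoot (by positivity) (by linarith)
  · refine le_trans ?_ (div_le_largerRoot (by positivity))
    rw [le_div_iff₀ (by positivity)]
    field_simp
    nlinarith [mul_nonneg (mul_nonneg hα ha.le) hb.le, mul_nonneg hγ.le (sub_nonneg.2 hab)]

lemma powerRoot_le_powerRoot (ha : 0 < a) (hb : 0 < b) (hγ : 0 < γ) {α β : ℝ}
    (hα : 0 ≤ α) (hαβ : α ≤ β)
    (hd : 0 ≤ (α * a * b - γ * (a + b)) ^ 2 - 4 * (γ * a * b) * (γ - a + b * (1 - α))) :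
    powerRoot a b γ α ≤ powerRoot a b γ β := by
  set r := powerRoot a b γ α
  have hroot : γ * a * b * r ^ 2 - (α * a * b - γ * (a + b)) * r + (γ - a + b * (1 - α)) = 0 :=
    largerRoot_isRoot (by positivity) hd
  have hr : 0 ≤ a * r + 1 := by
    have := mul_le_mul_of_nonneg_left (neg_inv_le_powerRoot ha hb hγ hα) ha.le
    rw [mul_neg, mul_inv_cancel₀ ha.ne'] at this
    linarith
  apply le_largerRoot (by positivity)
  nlinarith [mul_nonneg (mul_nonneg (sub_nonneg.2 hαβ) hb.le) hr]

end PowerRoot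

theorem stmt9 (a b γ : ℝ) (ha : 0 < a) (hb : 0 < b) (hγ : 0 < γ)
    (X Y P' : ℝ → ℝ)
    (hX : ∀ α, X α = α*a*b - γ*(a+b))
    (hY : ∀ α, Y α = 4*γ*a*b*(γ - a + b*(1-α)))
    (hP' : ∀ α, P' α = (X α + Real.sqrt ((X α)^2 - Y α)) / (2*γ*a*b))
    (hdisc : ∀ α ∈ Set.Icc (0:ℝ) 1, 0 ≤ (X α)^2 - Y α) :
    MonotoneOn P' (Set.Icc 0 1) ∧ P' 0 ≤ P' 1 := by
  have hY' : ∀ α, Y α = 4 * (γ * a * b) * (γ - a + b * (1 - α)) := fun α => by rw [hY]; ring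
  have hP : P' = powerRoot a b γ := by
    funext α
    rw [hP', powerRoot, largerRoot, hY', hX]
    ring_nf
  have mono : MonotoneOn P' (Icc 0 1) := by
    intro α hα β _ hαβ
    have hd := hdisc α hα
    rw [hY', hX] at hd
    rw [hP]
    exact powerRoot_le_powerRoot ha hb hγ hα.1 hαβ hd
  exact ⟨mono, mono ⟨le_rfl, zero_le_one⟩ ⟨zero_le_one, le_rfl⟩ zero_le_one⟩
end

section
/- In the game with u₀(P,α) = C(aP) − (1−α)C(bP) − γP and u₁(P,α) = α(C(cP₁ᵐᵃˣ/(1+aP)) − β), with a ≥ b and threshold Q < P'(0) ≤ P'(1) where P'(α) is the unique maximizer of u₀(·,α): the pair (P'(0), 0) is a Nash equilibrium, and at this equilibrium the secondary user's utility is 0. -/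
theorem C_le_iff {x y : ℝ} (hx : -1 < x) : C x ≤ y ↔ 1 + x ≤ (2:ℝ) ^ (2 * y) := by
  rw [← Real.logb_le_iff_le_rpow one_lt_two (by linarith), C]
  constructor <;> intro h <;> linarith

theorem C_div_le_of_threshold_lt {a k β P : ℝ} (ha : 0 < a) (hβ : 0 < β) (hk : 0 ≤ k)
    (hP : (1/a) * (k / ((2:ℝ) ^ (2*β) - 1) - 1) < P) :
    C (k / (1 + a * P)) ≤ β := by
  have ht : 0 < (2:ℝ) ^ (2*β) - 1 :=
    sub_pos.2 (Real.one_lt_rpow one_lt_two (by positivity))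
  have hs : k / ((2:ℝ) ^ (2*β) - 1) < 1 + a * P := by
    rw [one_div, inv_mul_lt_iff₀ ha] at hP
    linarith
  -- positivity of `1 + a * P` comes from the threshold itself, without assuming `0 ≤ P`
  have hpos : 0 < 1 + a * P := (div_nonneg hk ht.le).trans_lt hs
  have hlt : k / (1 + a * P) < (2:ℝ) ^ (2*β) - 1 := (div_lt_comm₀ hpos ht).2 hs
  rw [C_le_iff (by linarith [div_nonneg hk hpos.le])]
  linarith

theorem stmt11_general (a c β P1max P0max : ℝ)
    (ha : 0 < a) (hc : 0 < c) (hβ : 0 < β)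
    (hP1 : 0 < P1max)
    (u0 u1 : ℝ → ℝ → ℝ)
    (hu1 : ∀ P α, u1 P α = α * (C (c * P1max / (1 + a * P)) - β))
    (Q : ℝ) (hQ : Q = (1/a) * (c * P1max / ((2:ℝ) ^ (2*β) - 1) - 1))
    (P' : ℝ → ℝ)
    (hP'max : ∀ α ∈ Set.Icc (0:ℝ) 1, ∀ P ∈ Set.Icc 0 P0max,
        P ≠ P' α → u0 P α < u0 (P' α) α)
    (hQlt : Q < P' 0) :
    (∀ P ∈ Set.Icc 0 P0max, u0 P 0 ≤ u0 (P' 0) 0) ∧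
    (∀ α ∈ Set.Icc (0:ℝ) 1, u1 (P' 0) α ≤ u1 (P' 0) 0) ∧
    u1 (P' 0) 0 = 0 := by
  have hrate : C (c * P1max / (1 + a * P' 0)) ≤ β :=
    C_div_le_of_threshold_lt ha hβ (by positivity) (hQ ▸ hQlt)
  refine ⟨fun P hP => ?_, fun α hα => ?_, by rw [hu1, zero_mul]⟩
  · rcases eq_or_ne P (P' 0) with rfl | hne
    · exact le_rfl
    · exact (hP'max 0 ⟨le_rfl, zero_le_one⟩ P hP hne).le
  · rw [hu1, hu1, zero_mul]
    exact mul_nonpos_of_nonneg_of_nonpos hα.1 (sub_nonpos.2 hrate)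

theorem stmt11 (a b c γ β P1max P0max : ℝ)
    (ha : 0 < a) (hb : 0 < b) (hc : 0 < c) (hγ : 0 < γ) (hβ : 0 < β)
    (hP1 : 0 < P1max) (hP0max : 0 < P0max) (hab : a ≥ b)
    (u0 u1 : ℝ → ℝ → ℝ)
    (hu0 : ∀ P α, u0 P α = C (a * P) - (1 - α) * C (b * P) - γ * P)
    (hu1 : ∀ P α, u1 P α = α * (C (c * P1max / (1 + a * P)) - β))
    (Q : ℝ) (hQ : Q = (1/a) * (c * P1max / ((2:ℝ) ^ (2*β) - 1) - 1))
    (P' : ℝ → ℝ)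
    (hP'mem : ∀ α ∈ Set.Icc (0:ℝ) 1, P' α ∈ Set.Icc 0 P0max)
    (hP'max : ∀ α ∈ Set.Icc (0:ℝ) 1, ∀ P ∈ Set.Icc 0 P0max,
        P ≠ P' α → u0 P α < u0 (P' α) α)
    (hQlt : Q < P' 0) :
    (∀ P ∈ Set.Icc 0 P0max, u0 P 0 ≤ u0 (P' 0) 0) ∧
    (∀ α ∈ Set.Icc (0:ℝ) 1, u1 (P' 0) α ≤ u1 (P' 0) 0) ∧
    u1 (P' 0) 0 = 0 :=
  stmt11_general a c β P1max P0max ha hc hβ hP1 u0 u1 hu1 Q hQ P' hP'max hQlt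
end

section
/- In the same game with a ≥ b, if Q > P'(1) then (P'(1), 1) is a Nash equilibrium, and at this point the primary utility equals C(aP'(1)) − γP'(1) (the eavesdropping term vanishes) and the secondary utility is strictly positive. -/
/- At P = P'(1) the interference seen by the secondary user is low enough (P'(1) < Q) that its
rate exceeds the cost β, so its payoff is a positive multiple of α and is maximised at α = 1;
and at α = 1 the eavesdropping term (1 - α) C(bP) of the primary payoff is zero. -/

theorem lt_C_iff {β y : ℝ} (hy : -1 < y) : β < C y ↔ (2:ℝ) ^ (2 * β) - 1 < y := by
  rw [C, sub_lt_iff_lt_add', ← Real.lt_logb_iff_rpow_lt one_lt_two (by linarith)]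
  constructor <;> intro h <;> linarith

theorem lt_div_one_add_mul_of_lt_threshold {a d K P : ℝ} (ha : 0 < a) (hd : 0 < d) (hP : 0 ≤ P)
    (hlt : P < (1 / a) * (K / d - 1)) : d < K / (1 + a * P) := by
  have hden : 0 < 1 + a * P := by positivity
  have h : 1 + a * P < K / d := by
    have := mul_lt_mul_of_pos_left hlt ha
    rw [← mul_assoc, mul_one_div_cancel ha.ne', one_mul] at this
    linarith
  rw [lt_div_iff₀ hd] at h
  rw [lt_div_iff₀ hden]
  linarith

theorem lt_C_div_of_lt_threshold {a β K P : ℝ} (ha : 0 < a) (hβ : 0 < β) (hP : 0 ≤ P)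
    (hlt : P < (1 / a) * (K / ((2:ℝ) ^ (2 * β) - 1) - 1)) : β < C (K / (1 + a * P)) := by
  have hpow : 0 < (2:ℝ) ^ (2 * β) - 1 :=
    sub_pos.mpr (Real.one_lt_rpow one_lt_two (by positivity))
  have hrate := lt_div_one_add_mul_of_lt_threshold ha hpow hP hlt
  exact (lt_C_iff (by linarith)).mpr hrate

theorem stmt12_general (a b c γ β P1max P0max : ℝ)
    (ha : 0 < a) (hβ : 0 < β)
    (u0 u1 : ℝ → ℝ → ℝ)
    (hu0 : ∀ P α, u0 P α = C (a * P) - (1 - α) * C (b * P) - γ * P)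
    (hu1 : ∀ P α, u1 P α = α * (C (c * P1max / (1 + a * P)) - β))
    (Q : ℝ) (hQ : Q = (1/a) * (c * P1max / ((2:ℝ) ^ (2*β) - 1) - 1))
    (P' : ℝ → ℝ)
    (hP'mem : ∀ α ∈ Set.Icc (0:ℝ) 1, P' α ∈ Set.Icc 0 P0max)
    (hP'max : ∀ α ∈ Set.Icc (0:ℝ) 1, ∀ P ∈ Set.Icc 0 P0max,
        P ≠ P' α → u0 P α < u0 (P' α) α)
    (hQgt : P' 1 < Q) :
    (∀ P ∈ Set.Icc 0 P0max, u0 P 1 ≤ u0 (P' 1) 1) ∧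
    (∀ α ∈ Set.Icc (0:ℝ) 1, u1 (P' 1) α ≤ u1 (P' 1) 1) ∧
    u0 (P' 1) 1 = C (a * P' 1) - γ * P' 1 ∧
    0 < u1 (P' 1) 1 := by
  have h1 : (1:ℝ) ∈ Set.Icc (0:ℝ) 1 := ⟨zero_le_one, le_rfl⟩
  have hgain : 0 < C (c * P1max / (1 + a * P' 1)) - β :=
    sub_pos.mpr (lt_C_div_of_lt_threshold ha hβ (hP'mem 1 h1).1 (hQ ▸ hQgt))
  refine ⟨fun P hP => ?_, fun α hα => ?_, by rw [hu0]; ring, by rw [hu1]; linarith⟩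
  · rcases eq_or_ne P (P' 1) with rfl | hne
    · exact le_rfl
    · exact (hP'max 1 h1 P hP hne).le
  · rw [hu1, hu1, one_mul]
    exact mul_le_of_le_one_left hgain.le hα.2

theorem stmt12 (a b c γ β P1max P0max : ℝ)
    (ha : 0 < a) (hb : 0 < b) (hc : 0 < c) (hγ : 0 < γ) (hβ : 0 < β)
    (hP1 : 0 < P1max) (hP0max : 0 < P0max) (hab : a ≥ b)
    (u0 u1 : ℝ → ℝ → ℝ)
    (hu0 : ∀ P α, u0 P α = C (a * P) - (1 - α) * C (b * P) - γ * P)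
    (hu1 : ∀ P α, u1 P α = α * (C (c * P1max / (1 + a * P)) - β))
    (Q : ℝ) (hQ : Q = (1/a) * (c * P1max / ((2:ℝ) ^ (2*β) - 1) - 1))
    (P' : ℝ → ℝ)
    (hP'mem : ∀ α ∈ Set.Icc (0:ℝ) 1, P' α ∈ Set.Icc 0 P0max)
    (hP'max : ∀ α ∈ Set.Icc (0:ℝ) 1, ∀ P ∈ Set.Icc 0 P0max,
        P ≠ P' α → u0 P α < u0 (P' α) α)
    (hQgt : P' 1 < Q) :
    (∀ P ∈ Set.Icc 0 P0max, u0 P 1 ≤ u0 (P' 1) 1) ∧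
    (∀ α ∈ Set.Icc (0:ℝ) 1, u1 (P' 1) α ≤ u1 (P' 1) 1) ∧
    u0 (P' 1) 1 = C (a * P' 1) - γ * P' 1 ∧
    0 < u1 (P' 1) 1 :=
  stmt12_general a b c γ β P1max P0max ha hβ u0 u1 hu0 hu1 Q hQ P' hP'mem hP'max hQgt
end

section
/- Suppose a < b and Q < 0 (i.e., C(cP₁ᵐᵃˣ) ≤ β is strict: C(cP₁ᵐᵃˣ) < β). Then (P₀, α) = (0, 0) is a Nash equilibrium of the game, and it yields utility 0 to both players. -/
lemma C_zero : C 0 = 0 := by simp [C]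

lemma C_le_C {x y : ℝ} (hx : -1 < x) (hxy : x ≤ y) : C x ≤ C y := by
  unfold C
  gcongr
  · norm_num
  · linarith

theorem stmt14_general (a b c γ β P1max : ℝ)
    (ha : 0 < a) (hγ : 0 < γ) (hab : a < b)
    (hQneg : C (c * P1max) < β)
    (u0 u1 : ℝ → ℝ → ℝ)
    (hu0 : ∀ P α, u0 P α = C (a * P) - (1 - α) * C (b * P) - γ * P)
    (hu1 : ∀ P α, u1 P α = α * (C (c * P1max / (1 + a * P)) - β)) :
    (∀ P : ℝ, 0 ≤ P → u0 P 0 ≤ u0 0 0) ∧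
    (∀ α ∈ Set.Icc (0:ℝ) 1, u1 0 α ≤ u1 0 0) ∧
    u0 0 0 = 0 ∧ u1 0 0 = 0 := by
  have h00 : u0 0 0 = 0 := by simp [hu0, C_zero]
  have h10 : u1 0 0 = 0 := by simp [hu1]
  refine ⟨fun P hP => ?_, fun α hα => ?_, h00, h10⟩
  · have hC : C (a * P) ≤ C (b * P) :=
      C_le_C (by nlinarith) (mul_le_mul_of_nonneg_right hab.le hP)
    rw [hu0, h00]
    linarith [mul_nonneg hγ.le hP]
  · rw [hu1, h10]
    simpa using mul_nonpos_of_nonneg_of_nonpos hα.1 (sub_neg.mpr hQneg).le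

theorem stmt14 (a b c γ β P1max : ℝ)
    (ha : 0 < a) (hb : 0 < b) (hc : 0 < c) (hγ : 0 < γ) (hβ : 0 < β)
    (hP1 : 0 < P1max) (hab : a < b)
    (hQneg : C (c * P1max) < β)
    (u0 u1 : ℝ → ℝ → ℝ)
    (hu0 : ∀ P α, u0 P α = C (a * P) - (1 - α) * C (b * P) - γ * P)
    (hu1 : ∀ P α, u1 P α = α * (C (c * P1max / (1 + a * P)) - β)) :
    (∀ P : ℝ, 0 ≤ P → u0 P 0 ≤ u0 0 0) ∧
    (∀ α ∈ Set.Icc (0:ℝ) 1, u1 0 α ≤ u1 0 0) ∧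
    u0 0 0 = 0 ∧ u1 0 0 = 0 :=
  stmt14_general a b c γ β P1max ha hγ hab hQneg u0 u1 hu0 hu1
end

section
/- For fixed b̄ > 0, the map P ↦ e^{1/(b̄P)}·E₁(1/(b̄P)) is strictly increasing and concave on (0, ∞), with limit 0 as P → 0⁺. -/
/-!
The substitution `t = s + 1/u` gives `e^{1/u} E₁(1/u) = ∫₀^∞ e^{-s} · u / (1 + s u) ds`, and the
function of the theorem is this at `u = b̄ P`. For every `s ≥ 0` the kernel `u ↦ u / (1 + s u)` is
strictly increasing and concave on `[0, ∞)` and bounded by `u`; integrating against `e^{-s} ds`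
keeps monotonicity and concavity, and the bound squeezes the integral between `0` and `u`.
-/

noncomputable def E1 (x : ℝ) : ℝ := ∫ t in Set.Ioi x, Real.exp (-t) / t

open MeasureTheory Real Set Filter Topology

section IntegralOfFamily

variable {α : Type*} [MeasurableSpace α] {μ : Measure α}

theorem integral_lt_integral_of_ae_lt {f g : α → ℝ} (hμ : μ ≠ 0) (hf : Integrable f μ)
    (hg : Integrable g μ) (h : ∀ᵐ a ∂μ, f a < g a) : ∫ a, f a ∂μ < ∫ a, g a ∂μ := by
  rw [← sub_pos, ← integral_sub hg hf,
    integral_pos_iff_support_of_nonneg_ae (h.mono fun a ha => (sub_pos.2 ha).le) (hg.sub hf),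
    pos_iff_ne_zero]
  intro h0
  have hfalse : ∀ᵐ a ∂μ, False := by
    filter_upwards [h, measure_eq_zero_iff_ae_notMem.1 h0] with a hlt hnot
    exact hnot (sub_ne_zero.2 hlt.ne')
  exact hμ (ae_eq_bot.1 (eventually_false_iff_eq_bot.1 hfalse))

theorem strictMonoOn_integral {β : Type*} [Preorder β] {F : α → β → ℝ} {D : Set β} (hμ : μ ≠ 0)
    (hF : ∀ᵐ a ∂μ, StrictMonoOn (F a) D) (hint : ∀ x ∈ D, Integrable (F · x) μ) :
    StrictMonoOn (fun x => ∫ a, F a x ∂μ) D := fun x hx y hy hxy =>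
  integral_lt_integral_of_ae_lt hμ (hint x hx) (hint y hy) (hF.mono fun _ ha => ha hx hy hxy)

theorem concaveOn_integral {E : Type*} [AddCommGroup E] [Module ℝ E] {F : α → E → ℝ} {D : Set E}
    (hD : Convex ℝ D) (hF : ∀ᵐ a ∂μ, ConcaveOn ℝ D (F a))
    (hint : ∀ x ∈ D, Integrable (F · x) μ) : ConcaveOn ℝ D (fun x => ∫ a, F a x ∂μ) := by
  refine ⟨hD, fun x hx y hy s t hs ht hst => ?_⟩
  simp only [smul_eq_mul, ← integral_const_mul]
  rw [← integral_add ((hint x hx).const_mul s) ((hint y hy).const_mul t)]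
  refine integral_mono_ae (((hint x hx).const_mul s).add ((hint y hy).const_mul t))
    (hint _ (hD hx hy hs ht hst)) ?_
  filter_upwards [hF] with a ha
  simpa only [smul_eq_mul] using ha.2 hx hy hs ht hst

end IntegralOfFamily

section Kernel

variable {s : ℝ}

theorem strictMonoOn_div_one_add_mul (hs : 0 ≤ s) :
    StrictMonoOn (fun u => u / (1 + s * u)) (Ici 0) := by
  intro u (hu : 0 ≤ u) v (hv : 0 ≤ v) huv
  simp only
  rw [div_lt_div_iff₀ (by positivity) (by positivity)]
  linarith

theorem concaveOn_div_one_add_mul (hs : 0 ≤ s) :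
    ConcaveOn ℝ (Ici 0) (fun u => u / (1 + s * u)) := by
  refine ⟨convex_Ici 0, fun u (hu : 0 ≤ u) v (hv : 0 ≤ v) a b ha hb hab => ?_⟩
  obtain rfl : b = 1 - a := by linarith
  simp only [smul_eq_mul]
  rw [mul_div_assoc', mul_div_assoc', div_add_div _ _ (by positivity) (by positivity),
    div_le_div_iff₀ (by positivity) (by positivity)]
  nlinarith [mul_nonneg (mul_nonneg (mul_nonneg hs ha) hb) (sq_nonneg (u - v))]

theorem div_one_add_mul_le_self (hs : 0 ≤ s) {u : ℝ} (hu : 0 ≤ u) : u / (1 + s * u) ≤ u :=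
  div_le_self hu (by nlinarith [mul_nonneg hs hu])

end Kernel

theorem integrableOn_exp_neg_mul_div_one_add_mul {u : ℝ} (hu : 0 ≤ u) :
    IntegrableOn (fun s => exp (-s) * (u / (1 + s * u))) (Ioi 0) := by
  refine ((integrableOn_exp_neg_Ioi 0).mul_const u).mono' (by fun_prop) ?_
  filter_upwards [ae_restrict_mem measurableSet_Ioi] with s (hs : 0 < s)
  rw [norm_of_nonneg (by positivity)]
  exact mul_le_mul_of_nonneg_left (div_one_add_mul_le_self hs.le hu) (exp_pos _).le

theorem setIntegral_Ioi_comp_add_right (f : ℝ → ℝ) (x : ℝ) :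
    ∫ s in Ioi 0, f (s + x) = ∫ t in Ioi x, f t := by
  have h := (measurePreserving_add_right (volume : Measure ℝ) x).setIntegral_preimage_emb
    (MeasurableEquiv.addRight x).measurableEmbedding f (Ioi x)
  simpa [MeasurableEquiv.addRight, preimage_add_const_Ioi] using h

theorem exp_mul_E1_eq_integral {u : ℝ} (hu : 0 < u) :
    exp (1 / u) * E1 (1 / u) = ∫ s in Ioi 0, exp (-s) * (u / (1 + s * u)) := by
  rw [E1, ← setIntegral_Ioi_comp_add_right, ← integral_const_mul]
  refine setIntegral_congr_fun measurableSet_Ioi fun s (hs : 0 < s) => ?_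
  have h1 : 1 + s * u ≠ 0 := by positivity
  have h2 : s + 1 / u ≠ 0 := by positivity
  have hcancel : exp (1 / u) * exp (-(1 / u)) = 1 := by rw [← exp_add, add_neg_cancel, exp_zero]
  rw [neg_add, exp_add]
  field_simp
  linear_combination (1 + u * s) * hcancel

theorem strictMonoOn_exp_mul_E1_one_div :
    StrictMonoOn (fun u => exp (1 / u) * E1 (1 / u)) (Ioi 0) := by
  refine (strictMonoOn_integral ?_ ?_ fun u (hu : 0 < u) => ?_).congr
    fun _ hu => (exp_mul_E1_eq_integral hu).symm
  · simp [Measure.restrict_eq_zero]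
  · refine ae_restrict_of_forall_mem measurableSet_Ioi fun s (hs : 0 < s) u hu v hv huv => ?_
    exact mul_lt_mul_of_pos_left
      (strictMonoOn_div_one_add_mul hs.le (mem_Ici_of_Ioi hu) (mem_Ici_of_Ioi hv) huv) (exp_pos _)
  · exact integrableOn_exp_neg_mul_div_one_add_mul hu.le

theorem concaveOn_exp_mul_E1_one_div :
    ConcaveOn ℝ (Ioi 0) (fun u => exp (1 / u) * E1 (1 / u)) := by
  refine (concaveOn_integral (convex_Ioi 0) ?_ fun u (hu : 0 < u) => ?_).congr
    fun _ hu => (exp_mul_E1_eq_integral hu).symm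
  · refine ae_restrict_of_forall_mem measurableSet_Ioi fun s (hs : 0 < s) => ?_
    exact ((concaveOn_div_one_add_mul hs.le).subset Ioi_subset_Ici_self (convex_Ioi 0)).smul
      (exp_pos _).le
  · exact integrableOn_exp_neg_mul_div_one_add_mul hu.le

theorem exp_mul_E1_one_div_le_self {u : ℝ} (hu : 0 < u) : exp (1 / u) * E1 (1 / u) ≤ u := by
  rw [exp_mul_E1_eq_integral hu]
  calc ∫ s in Ioi 0, exp (-s) * (u / (1 + s * u))
      ≤ ∫ s in Ioi 0, exp (-s) * u := by
        refine setIntegral_mono_on (integrableOn_exp_neg_mul_div_one_add_mul hu.le) ?_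
          measurableSet_Ioi fun s (hs : 0 < s) => ?_
        · exact (integrableOn_exp_neg_Ioi 0).mul_const u
        · exact mul_le_mul_of_nonneg_left (div_one_add_mul_le_self hs.le hu.le) (exp_pos _).le
    _ = u := by rw [integral_mul_const, integral_exp_neg_Ioi_zero, one_mul]

theorem exp_mul_E1_one_div_nonneg {u : ℝ} (hu : 0 < u) : 0 ≤ exp (1 / u) * E1 (1 / u) := by
  rw [exp_mul_E1_eq_integral hu]
  exact setIntegral_nonneg measurableSet_Ioi fun s (hs : 0 < s) => by positivity

theorem tendsto_exp_mul_E1_one_div_nhdsGT_zero :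
    Tendsto (fun u => exp (1 / u) * E1 (1 / u)) (𝓝[>] 0) (𝓝 0) :=
  tendsto_of_tendsto_of_tendsto_of_le_of_le' tendsto_const_nhds nhdsWithin_le_nhds
    (eventually_nhdsWithin_of_forall fun _ hu => exp_mul_E1_one_div_nonneg hu)
    (eventually_nhdsWithin_of_forall fun _ hu => exp_mul_E1_one_div_le_self hu)

theorem stmt18 (bbar : ℝ) (hb : 0 < bbar) :
    StrictMonoOn (fun P => Real.exp (1 / (bbar * P)) * E1 (1 / (bbar * P))) (Set.Ioi (0:ℝ)) ∧
    ConcaveOn ℝ (Set.Ioi (0:ℝ))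
      (fun P => Real.exp (1 / (bbar * P)) * E1 (1 / (bbar * P))) ∧
    Filter.Tendsto (fun P => Real.exp (1 / (bbar * P)) * E1 (1 / (bbar * P)))
      (nhdsWithin 0 (Set.Ioi 0)) (nhds 0) := by
  have hmaps : MapsTo (bbar * ·) (Ioi (0 : ℝ)) (Ioi 0) := fun P (hP : 0 < P) => mul_pos hb hP
  have hpre : (bbar * ·) ⁻¹' Ioi (0 : ℝ) = Ioi 0 := by rw [preimage_const_mul_Ioi₀ 0 hb, zero_div]
  refine ⟨strictMonoOn_exp_mul_E1_one_div.comp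
    ((strictMono_mul_left_of_pos hb).strictMonoOn _) hmaps, ?_, ?_⟩
  · have h := concaveOn_exp_mul_E1_one_div.comp_linearMap (LinearMap.mul ℝ ℝ bbar)
    rwa [show ⇑(LinearMap.mul ℝ ℝ bbar) = (bbar * ·) from rfl, hpre] at h
  · refine tendsto_exp_mul_E1_one_div_nhdsGT_zero.comp (tendsto_nhdsWithin_iff.2 ⟨?_, ?_⟩)
    · exact ((continuous_const_mul bbar).tendsto' 0 0 (mul_zero _)).mono_left nhdsWithin_le_nhds
    · exact eventually_nhdsWithin_of_forall hmaps
end
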